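/- arXiv:1804.04574 — 3 statements merged into one kernel-verified Lean document; each statement's English description precedes it below -/
import Mathlib

section
/- In a network graph with the tree consistency property, if two paths P(b,b₁) and P(b,b₂) from the same source b both pass through a vertex x, then the two paths coincide (traverse the same sequence of vertices and edges) from b up to x. -/
/-
Tree consistency makes the common vertices of `P b b₁` and `P b b₂` a contiguous segment `c`
of both paths, possibly traversed backwards along the second. Since the source `b` lies on
both paths, it lies on `c`; as paths have no repeated vertices, a segment containing the first
vertex of a path is an initial segment of it. If `c` ran backwards along `P b b₂`, then `b`
would be both its first and its last vertex, so `c = [b]`, which runs in both directions.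
Either way `c` is a common initial segment of the two paths, and it contains `x`.
-/

def WellFormed {V : Type} (E : V → V → Prop) (VB : Set V) (P : V → V → List V) : Prop :=
  ∀ b b', b ∈ VB → b' ∈ VB → b ≠ b' →
    (P b b').head? = some b ∧ (P b b').getLast? = some b' ∧
    (P b b').Nodup ∧ List.Chain' E (P b b') ∧
    (∀ v ∈ P b b', v ∈ VB → v = b ∨ v = b')

def TreeConsistent {V : Type} (VB : Set V) (P : V → V → List V) : Prop :=
  ∀ b1 b1' b2 b2', b1 ∈ VB → b1' ∈ VB → b2 ∈ VB → b2' ∈ VB → b1 ≠ b1' → b2 ≠ b2' →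
    ∃ c : List V, c <:+: P b1 b1' ∧ (c <:+: P b2 b2' ∨ c.reverse <:+: P b2 b2') ∧
      ∀ v, (v ∈ P b1 b1' ∧ v ∈ P b2 b2') ↔ v ∈ c

namespace List

variable {α : Type*} {l c : List α} {a : α}

theorem IsPrefix.head?_eq (h : c <+: l) (hc : c ≠ []) : c.head? = l.head? := by
  obtain ⟨t, rfl⟩ := h
  cases c with
  | nil => exact absurd rfl hc
  | cons a c => rfl

theorem IsInfix.isPrefix_of_head?_mem (hl : l.Nodup) (hh : l.head? = some a)
    (hc : c <:+: l) (ha : a ∈ c) : c <+: l := by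
  obtain ⟨s, t, rfl⟩ := hc
  cases s with
  | nil => exact ⟨t, by simp⟩
  | cons a' s =>
    obtain rfl : a' = a := by simpa using hh
    simp only [cons_append, append_assoc, nodup_cons, mem_append] at hl
    exact absurd (Or.inr (Or.inl ha)) hl.1

theorem Nodup.eq_singleton_of_head?_of_getLast? (hc : c.Nodup) (hh : c.head? = some a)
    (hl : c.getLast? = some a) : c = [a] := by
  match c, hc with
  | [], _ => simp at hh
  | [a'], _ => simpa using hh
  | a' :: a'' :: t, hc =>
    obtain rfl : a' = a := by simpa using hh
    rw [getLast?_cons_cons] at hl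
    exact absurd (mem_of_getLast? hl) (nodup_cons.mp hc).1

end List

open List

theorem WellFormed.exists_common_prefix {V : Type} {E : V → V → Prop} {VB : Set V}
    {P : V → V → List V} (hwf : WellFormed E VB P) (htc : TreeConsistent VB P)
    {b b1 b2 : V} (hb : b ∈ VB) (hb1 : b1 ∈ VB) (hb2 : b2 ∈ VB)
    (hbb1 : b ≠ b1) (hbb2 : b ≠ b2) :
    ∃ c : List V, c <+: P b b1 ∧ c <+: P b b2 ∧ ∀ v, (v ∈ P b b1 ∧ v ∈ P b b2) ↔ v ∈ c := by
  obtain ⟨hh1, -, hnd1, -, -⟩ := hwf b b1 hb hb1 hbb1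
  obtain ⟨hh2, -, hnd2, -, -⟩ := hwf b b2 hb hb2 hbb2
  obtain ⟨c, hc1, hc2, hmem⟩ := htc b b1 b b2 hb hb1 hb hb2 hbb1 hbb2
  have hbc : b ∈ c := (hmem b).mp ⟨mem_of_head? hh1, mem_of_head? hh2⟩
  have hpre1 : c <+: P b b1 := hc1.isPrefix_of_head?_mem hnd1 hh1 hbc
  refine ⟨c, hpre1, ?_, hmem⟩
  rcases hc2 with hc2 | hc2
  · exact hc2.isPrefix_of_head?_mem hnd2 hh2 hbc
  · have hrev : c.reverse <+: P b b2 := hc2.isPrefix_of_head?_mem hnd2 hh2 (mem_reverse.mpr hbc)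
    have hne : c ≠ [] := ne_nil_of_mem hbc
    have hhead : c.head? = some b := (hpre1.head?_eq hne).trans hh1
    have hlast : c.getLast? = some b := by
      rw [← head?_reverse, hrev.head?_eq (reverse_ne_nil_iff.mpr hne), hh2]
    have hsingle : c = [b] := (hnd1.sublist hc1.sublist).eq_singleton_of_head?_of_getLast? hhead hlast
    simpa [hsingle] using hrev

theorem stmt_9_general {V : Type} (E : V → V → Prop) (VB : Set V) (P : V → V → List V)
    (hwf : WellFormed E VB P) (htc : TreeConsistent VB P)
    (b b1 b2 : V) (hb : b ∈ VB) (hb1 : b1 ∈ VB) (hb2 : b2 ∈ VB)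
    (hbb1 : b ≠ b1) (hbb2 : b ≠ b2)
    (x : V) (hx1 : x ∈ P b b1) (hx2 : x ∈ P b b2) :
    ∃ c y z : List V, P b b1 = c ++ y ∧ P b b2 = c ++ z ∧ x ∈ c := by
  obtain ⟨c, ⟨y, hy⟩, ⟨z, hz⟩, hmem⟩ := hwf.exists_common_prefix htc hb hb1 hb2 hbb1 hbb2
  exact ⟨c, y, z, hy.symm, hz.symm, (hmem x).mp ⟨hx1, hx2⟩⟩

/-- In a tree-consistent network graph, two paths from the same source that both
pass through a vertex `x` coincide from the source up to `x`: they are of the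
form `c ++ y` and `c ++ z` with `x` on the common initial segment `c`. -/
theorem stmt_9 {V : Type} (E : V → V → Prop) (VB : Set V) (P : V → V → List V)
    (hwf : WellFormed E VB P) (htc : TreeConsistent VB P)
    (b b1 b2 : V) (hb : b ∈ VB) (hb1 : b1 ∈ VB) (hb2 : b2 ∈ VB)
    (hbb1 : b ≠ b1) (hbb2 : b ≠ b2) (hb12 : b1 ≠ b2)
    (x : V) (hx1 : x ∈ P b b1) (hx2 : x ∈ P b b2) :
    ∃ c y z : List V, P b b1 = c ++ y ∧ P b b2 = c ++ z ∧ x ∈ c :=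
  stmt_9_general E VB P hwf htc b b1 b2 hb hb1 hb2 hbb1 hbb2 x hx1 hx2
end

section
/- In a network graph with the tree consistency property, let b, b₁, b₂ be distinct boundary vertices and suppose P(b,b₁) and P(b,b₂) both pass through a vertex x, and P(b,b₁) passes through edges e₁ = (x₁,x) and e₂ = (x,x₂) while P(b,b₂) does not contain both e₁ and e₂. Then P(b,b₂) contains e₁, does not contain e₂, and the two paths diverge exactly at x, i.e., x is the (b ≺ b₁,b₂)-junction. -/
def IsSourceJunction {V : Type} (P : V → V → List V) (x b b1 b2 : V) : Prop :=
  ∃ c y z : List V, P b b1 = c ++ y ∧ P b b2 = c ++ z ∧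
    (∀ v ∈ y, v ∉ z) ∧ c.getLast? = some x


/-!
By tree consistency the common vertices of `P(b,b₁)` and `P(b,b₂)` form a segment of both paths
containing their first vertex `b`; since the paths are simple, this segment is a common prefix `c`.
The vertex `x` is common, so it lies in `c`, and so does its predecessor `x₁` on `P(b,b₁)`.
If `x₂` lay in `c` too, both edges would lie on `P(b,b₂)`; hence `x₂ ∉ c`, so `x` is the last
vertex of `c`, and beyond `c` the two paths share no vertex.
-/

namespace List

variable {α : Type*}

theorem Nodup.eq_singleton_of_head?_of_getLast?_s10 {l : List α} {a : α} (hn : l.Nodup)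
    (hhead : l.head? = some a) (hlast : l.getLast? = some a) : l = [a] := by
  obtain ⟨t, rfl⟩ := head?_eq_some_iff.1 hhead
  cases t with
  | nil => rfl
  | cons b t =>
    rw [getLast?_cons_cons] at hlast
    exact absurd (mem_of_getLast? hlast) (nodup_cons.1 hn).1

theorem IsInfix.isPrefix_of_head?_mem_s10 {p l : List α} {a : α} (h : p <:+: l) (hn : l.Nodup)
    (hhead : l.head? = some a) (ha : a ∈ p) : p <+: l := by
  obtain ⟨s, t, rfl⟩ := h
  cases s with
  | nil => exact prefix_append _ _
  | cons c s =>
    obtain rfl : c = a := by simpa using hhead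
    rw [append_assoc, nodup_append] at hn
    exact absurd rfl (hn.2.2 c mem_cons_self c (mem_append_left t ha))

theorem pair_infix_append {a b : α} {xs ys : List α} (h : [a, b] <:+: xs ++ ys) :
    [a, b] <:+: xs ∨ [a, b] <:+: ys ∨ xs.getLast? = some a ∧ ys.head? = some b := by
  rcases infix_append_iff.1 h with h | h | ⟨l₁, l₂, hl, h₁, h₂⟩
  · exact .inl h
  · exact .inr (.inl h)
  · match l₁, l₂, hl with
    | [], _, rfl => exact .inr (.inl h₂.isInfix)
    | [_], _, rfl =>
      obtain ⟨s, rfl⟩ := h₁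
      obtain ⟨t, rfl⟩ := h₂
      exact .inr (.inr ⟨getLast?_concat, rfl⟩)
    | [_, _], _, rfl => exact .inl h₁.isInfix
    | _ :: _ :: _ :: _, _, hl => simp at hl

theorem pair_infix_left_of_mem {a b : α} {xs ys : List α} (hn : (xs ++ ys).Nodup)
    (h : [a, b] <:+: xs ++ ys) (hb : b ∈ xs) : [a, b] <:+: xs := by
  have hby : b ∉ ys := fun hby => (nodup_append.1 hn).2.2 b hb b hby rfl
  rcases pair_infix_append h with h | h | ⟨-, h⟩
  · exact h
  · exact absurd (h.subset (by simp)) hby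
  · exact absurd (mem_of_head? h) hby

theorem getLast?_eq_of_pair_infix_append {a b : α} {xs ys : List α} (hn : (xs ++ ys).Nodup)
    (h : [a, b] <:+: xs ++ ys) (ha : a ∈ xs) (hb : b ∉ xs) : xs.getLast? = some a := by
  rcases pair_infix_append h with h | h | ⟨h, -⟩
  · exact absurd (h.subset (by simp)) hb
  · exact absurd rfl ((nodup_append.1 hn).2.2 a ha a (h.subset (by simp)))
  · exact h

end List

open List

theorem exists_common_prefix_of_treeConsistent {V : Type} {E : V → V → Prop} {VB : Set V}
    {P : V → V → List V} (hwf : WellFormed E VB P) (htc : TreeConsistent VB P)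
    {b b1 b2 : V} (hb : b ∈ VB) (hb1 : b1 ∈ VB) (hb2 : b2 ∈ VB)
    (hbb1 : b ≠ b1) (hbb2 : b ≠ b2) :
    ∃ c y z, P b b1 = c ++ y ∧ P b b2 = c ++ z ∧
      ∀ v, v ∈ P b b1 ∧ v ∈ P b b2 ↔ v ∈ c := by
  obtain ⟨h1head, -, h1nd, -⟩ := hwf b b1 hb hb1 hbb1
  obtain ⟨h2head, -, h2nd, -⟩ := hwf b b2 hb hb2 hbb2
  obtain ⟨c, hc1, hc2, hcommon⟩ := htc b b1 b b2 hb hb1 hb hb2 hbb1 hbb2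
  have hbc : b ∈ c := (hcommon b).1 ⟨mem_of_head? h1head, mem_of_head? h2head⟩
  obtain ⟨y, hy⟩ := hc1.isPrefix_of_head?_mem_s10 h1nd h1head hbc
  have hpre2 : c <+: P b b2 := by
    rcases hc2 with hc2 | hc2
    · exact hc2.isPrefix_of_head?_mem_s10 h2nd h2head hbc
    · obtain ⟨z, hz⟩ := hc2.isPrefix_of_head?_mem_s10 h2nd h2head (mem_reverse.2 hbc)
      have hhead : c.head? = some b := by
        rw [← head?_append_of_ne_nil c (ne_nil_of_mem hbc) (l₂ := y), hy, h1head]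
      have hlast : c.getLast? = some b := by
        rw [← head?_reverse,
          ← head?_append_of_ne_nil _ (by simpa using ne_nil_of_mem hbc) (l₂ := z), hz, h2head]
      have hc : c = [b] := (hc1.nodup h1nd).eq_singleton_of_head?_of_getLast?_s10 hhead hlast
      exact ⟨z, by simpa [hc] using hz⟩
  obtain ⟨z, hz⟩ := hpre2
  exact ⟨c, y, z, hy.symm, hz.symm, hcommon⟩

theorem stmt_10_general {V : Type} (E : V → V → Prop) (VB : Set V) (P : V → V → List V)
    (hwf : WellFormed E VB P) (htc : TreeConsistent VB P)
    (b b1 b2 : V) (hb : b ∈ VB) (hb1 : b1 ∈ VB) (hb2 : b2 ∈ VB)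
    (hbb1 : b ≠ b1) (hbb2 : b ≠ b2)
    (x x1 x2 : V)
    (he : [x1, x, x2] <:+: P b b1)
    (hx2mem : x ∈ P b b2)
    (hnot : ¬ ([x1, x] <:+: P b b2 ∧ [x, x2] <:+: P b b2)) :
    [x1, x] <:+: P b b2 ∧ ¬ ([x, x2] <:+: P b b2) ∧
      IsSourceJunction P x b b1 b2 := by
  obtain ⟨c, y, z, h1, h2, hcommon⟩ :=
    exists_common_prefix_of_treeConsistent hwf htc hb hb1 hb2 hbb1 hbb2
  have hnd : (c ++ y).Nodup := h1 ▸ (hwf b b1 hb hb1 hbb1).2.2.1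
  have he₁ : [x1, x] <:+: c ++ y := h1 ▸ (infix_append [] [x1, x] [x2]).trans he
  have he₂ : [x, x2] <:+: c ++ y := h1 ▸ (infix_append [x1] [x, x2] []).trans he
  have hxc : x ∈ c := (hcommon x).1 ⟨he.subset (by simp), hx2mem⟩
  have he₁' : [x1, x] <:+: P b b2 :=
    h2 ▸ infix_append_of_infix_left (pair_infix_left_of_mem hnd he₁ hxc)
  have hx2c : x2 ∉ c := fun hx2c =>
    hnot ⟨he₁', h2 ▸ infix_append_of_infix_left (pair_infix_left_of_mem hnd he₂ hx2c)⟩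
  refine ⟨he₁', fun he₂' => hx2c ((hcommon x2).1 ⟨he.subset (by simp), he₂'.subset (by simp)⟩),
    c, y, z, h1, h2, fun v hvy hvz => ?_, getLast?_eq_of_pair_infix_append hnd he₂ hxc hx2c⟩
  have hvc : v ∈ c := (hcommon v).1 ⟨h1 ▸ mem_append_right c hvy, h2 ▸ mem_append_right c hvz⟩
  exact (nodup_append.1 hnd).2.2 v hvc v hvy rfl

/-- If `P(b,b₁)` traverses the edges `e₁ = (x₁,x)` and `e₂ = (x,x₂)`, and
`P(b,b₂)` passes through `x` but does not contain both `e₁` and `e₂`, then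
`P(b,b₂)` contains `e₁`, does not contain `e₂`, and the two paths diverge
exactly at `x`, i.e. `x` is the `(b ≺ b₁,b₂)`-junction. -/
theorem stmt_10 {V : Type} (E : V → V → Prop) (VB : Set V) (P : V → V → List V)
    (hwf : WellFormed E VB P) (htc : TreeConsistent VB P)
    (b b1 b2 : V) (hb : b ∈ VB) (hb1 : b1 ∈ VB) (hb2 : b2 ∈ VB)
    (hbb1 : b ≠ b1) (hbb2 : b ≠ b2) (hb12 : b1 ≠ b2)
    (x x1 x2 : V)
    (he : [x1, x, x2] <:+: P b b1)
    (hx2mem : x ∈ P b b2)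
    (hnot : ¬ ([x1, x] <:+: P b b2 ∧ [x, x2] <:+: P b b2)) :
    [x1, x] <:+: P b b2 ∧ ¬ ([x, x2] <:+: P b b2) ∧
      IsSourceJunction P x b b1 b2 :=
  stmt_10_general E VB P hwf htc b b1 b2 hb hb1 hb2 hbb1 hbb2 x x1 x2 he hx2mem hnot
end

section
/- In a network graph with tree consistency, fix boundary vertices u, v and a vertex x on P(u,v) at distance δ' from x to v along P(u,v) (i.e., the weight of the portion of P(u,v) after x is δ'). For any boundary vertex z: if |P(u,v) ∩ P(z,v)| ≥ δ' then x lies on P(z,v), at cumulative distance |P(z,v)| − δ' from z along P(z,v). -/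
def pathEdges {V : Type} (p : List V) : List (V × V) := p.zip p.tail

def interLen {V : Type} [DecidableEq V] (W : V × V → ℝ) (p q : List V) : ℝ :=
  (((pathEdges p).filter (fun e => decide (e ∈ pathEdges q))).map W).sum

def distTo {V : Type} [DecidableEq V] (W : V × V → ℝ) (p : List V) (x : V) : ℝ :=
  ((pathEdges (p.takeWhile (fun v => v ≠ x) ++ [x])).map W).sum

/-- `pathLen` : total length of a path. -/
def pathLen {V : Type} (W : V × V → ℝ) (p : List V) : ℝ :=
  ((pathEdges p).map W).sum

/-! By tree consistency, `P(u,v) ∩ P(z,v)` is a segment `c` of both paths. It contains their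
common endpoint `v`, so it is a common final segment (if it runs backwards along `P(z,v)`, it is
just `[v]`), and `|P(u,v) ∩ P(z,v)| = |c|`. The part of `P(u,v)` from `x` on is a final segment of
length `δ' ≤ |c|`; as edge weights are positive, final segments are ordered by length, so it lies
in `c` and is therefore also the final segment of `P(z,v)` from `x`. -/

section PathEdges

open scoped List

variable {V : Type}

lemma pathEdges_cons_cons (a b : V) (l : List V) :
    pathEdges (a :: b :: l) = (a, b) :: pathEdges (b :: l) := rfl

lemma length_pathEdges (l : List V) : (pathEdges l).length = l.length - 1 := by
  simp [pathEdges]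

lemma pathEdges_append_cons (s : List V) (x : V) (r : List V) :
    pathEdges (s ++ x :: r) = pathEdges (s ++ [x]) ++ pathEdges (x :: r) := by
  induction s with
  | nil => rfl
  | cons a s ih =>
    cases s with
    | nil => rfl
    | cons b s => simp only [List.cons_append, pathEdges_cons_cons] at ih ⊢; rw [ih]

lemma pathEdges_append_sublist (s t : List V) :
    pathEdges s ++ pathEdges t <+ pathEdges (s ++ t) := by
  induction s with
  | nil => exact List.Sublist.refl _
  | cons a s ih =>
    cases s with
    | nil =>
      cases t with
      | nil => exact List.Sublist.refl _
      | cons b t => exact List.sublist_cons_self _ _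
    | cons b s => exact ih.cons_cons (a, b)

lemma List.IsInfix.pathEdges_sublist {a l : List V} (h : a <:+: l) :
    pathEdges a <+ pathEdges l := by
  obtain ⟨s, t, rfl⟩ := h
  calc pathEdges a
      <+ pathEdges s ++ pathEdges a := List.sublist_append_right _ _
    _ <+ pathEdges (s ++ a) := pathEdges_append_sublist s a
    _ <+ pathEdges (s ++ a) ++ pathEdges t := List.sublist_append_left _ _
    _ <+ pathEdges (s ++ a ++ t) := pathEdges_append_sublist _ t

lemma fst_mem_dropLast_of_mem_pathEdges {l : List V} {e : V × V} (h : e ∈ pathEdges l) :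
    e.1 ∈ l.dropLast := by
  induction l with
  | nil => simp [pathEdges] at h
  | cons a l ih =>
    cases l with
    | nil => simp [pathEdges] at h
    | cons b l =>
      rw [pathEdges_cons_cons, List.mem_cons] at h
      rcases h with rfl | h
      · simp
      · exact List.mem_cons_of_mem a (ih h)

lemma rel_of_mem_pathEdges {E : V → V → Prop} {l : List V} (hl : List.IsChain E l)
    {e : V × V} (he : e ∈ pathEdges l) : E e.1 e.2 := by
  induction l with
  | nil => simp [pathEdges] at he
  | cons a l ih =>
    cases l with
    | nil => simp [pathEdges] at he
    | cons b l =>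
      rw [pathEdges_cons_cons, List.mem_cons] at he
      rcases he with rfl | he
      · exact (List.isChain_cons_cons.1 hl).1
      · exact ih (List.isChain_cons_cons.1 hl).2 he

end PathEdges

section PathLen

variable {V : Type} (W : V × V → ℝ)

lemma pathLen_append_cons (s : List V) (x : V) (r : List V) :
    pathLen W (s ++ x :: r) = pathLen W (s ++ [x]) + pathLen W (x :: r) := by
  rw [pathLen, pathLen, pathLen, pathEdges_append_cons, List.map_append, List.sum_append]

lemma pathLen_pos {l : List V} (hpos : ∀ e ∈ pathEdges l, 0 < W e) (hl : 2 ≤ l.length) :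
    0 < pathLen W l := by
  refine List.sum_pos _ (fun w hw => ?_) fun h => ?_
  · obtain ⟨e, he, rfl⟩ := List.mem_map.1 hw
    exact hpos e he
  · have := congrArg List.length h
    simp only [List.length_map, length_pathEdges, List.length_nil] at this
    omega

lemma isSuffix_of_pathLen_le {l a b : List V} (hpos : ∀ e ∈ pathEdges l, 0 < W e)
    (ha : a <:+ l) (hb : b <:+ l) (hb0 : b ≠ []) (hle : pathLen W a ≤ pathLen W b) :
    a <:+ b := by
  rcases List.suffix_or_suffix_of_suffix ha hb with h | ⟨e, rfl⟩
  · exact h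
  obtain ⟨y, b, rfl⟩ := List.exists_cons_of_ne_nil hb0
  rcases e with _ | ⟨w, e⟩
  · exact List.suffix_refl _
  have hinfix : w :: e ++ [y] <:+: l := by
    refine List.IsInfix.trans ⟨[], b, ?_⟩ ha.isInfix
    simp
  have hpos' : 0 < pathLen W (w :: e ++ [y]) :=
    pathLen_pos W (fun f hf => hpos f (hinfix.pathEdges_sublist.subset hf)) (by simp)
  linarith [pathLen_append_cons W (w :: e) y b]

lemma distTo_append_cons [DecidableEq V] {s : List V} {x : V} (r : List V) (hx : x ∉ s) :
    distTo W (s ++ x :: r) x = pathLen W (s ++ [x]) := by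
  have hs : (s ++ x :: r).takeWhile (fun v => v ≠ x) = s := by
    rw [List.takeWhile_append_of_pos fun a ha => by simpa using ne_of_mem_of_not_mem ha hx]
    simp
  simp only [distTo, pathLen, hs]

lemma List.Nodup.distTo_eq_sub [DecidableEq V] {p r : List V} {x : V} (hp : p.Nodup)
    (hxr : x :: r <:+ p) : distTo W p x = pathLen W p - pathLen W (x :: r) := by
  obtain ⟨s, rfl⟩ := hxr
  have hx : x ∉ s := fun hxs => List.disjoint_of_nodup_append hp hxs List.mem_cons_self
  rw [distTo_append_cons W r hx, pathLen_append_cons W s x r]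
  ring

lemma interLen_eq_pathLen_of_isSuffix [DecidableEq V] {p q c : List V} (hp : p.Nodup)
    (hcp : c <:+ p) (hcq : c <:+ q) (hc : c ≠ []) (hpq : ∀ y ∈ p, y ∈ q → y ∈ c) :
    interLen W p q = pathLen W c := by
  obtain ⟨y, c, rfl⟩ := List.exists_cons_of_ne_nil hc
  obtain ⟨s, rfl⟩ := hcp
  have hbefore : (pathEdges (s ++ [y])).filter (fun e => decide (e ∈ pathEdges q)) = [] := by
    refine List.filter_eq_nil_iff.2 fun e hes heq => ?_
    have he1s : e.1 ∈ s := by simpa using fst_mem_dropLast_of_mem_pathEdges hes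
    have he1q : e.1 ∈ q :=
      List.dropLast_subset _ (fst_mem_dropLast_of_mem_pathEdges (by simpa using heq))
    exact List.disjoint_of_nodup_append hp he1s (hpq _ (List.mem_append_left _ he1s) he1q)
  have hafter : (pathEdges (y :: c)).filter (fun e => decide (e ∈ pathEdges q)) =
      pathEdges (y :: c) :=
    List.filter_eq_self.2 fun e he => by simpa using hcq.isInfix.pathEdges_sublist.subset he
  rw [interLen, pathEdges_append_cons, List.filter_append, hbefore, hafter, List.nil_append,
    pathLen]

end PathLen

section SharedSuffix

variable {V : Type}

lemma List.IsSuffix.getLast?_eq {c l : List V} (h : c <:+ l) (hc : c ≠ []) :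
    c.getLast? = l.getLast? := by
  rw [List.getLast?_eq_some_getLast hc, h.getLast hc, List.getLast?_eq_some_getLast]

lemma eq_singleton_of_head?_of_getLast? {c : List V} {v : V} (hc : c.Nodup)
    (hh : c.head? = some v) (hl : c.getLast? = some v) : c = [v] := by
  obtain ⟨c, rfl⟩ := List.getLast?_eq_some_iff.1 hl
  cases c with
  | nil => rfl
  | cons a c =>
    obtain rfl : a = v := by simpa using hh
    simp at hc

lemma isSuffix_of_isInfix_of_getLast? {c l : List V} {v : V} (hl : l.Nodup) (hcl : c <:+: l)
    (hv : l.getLast? = some v) (hvc : v ∈ c) : c <:+ l :=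
  hl.suffix_of_getLast_mem_of_infix hcl (by rwa [List.getLast_of_getLast?_eq_some hv])

/-- If `c` runs backwards along `q`, it both starts and ends at `v`, so it is `[v]`. -/
lemma isSuffix_of_isInfix_or_reverse {c p q : List V} {v : V} (hp : p.Nodup) (hq : q.Nodup)
    (hpv : p.getLast? = some v) (hqv : q.getLast? = some v) (hvc : v ∈ c)
    (hcp : c <:+: p) (hcq : c <:+: q ∨ c.reverse <:+: q) : c <:+ q := by
  rcases hcq with hcq | hcq
  · exact isSuffix_of_isInfix_of_getLast? hq hcq hqv hvc
  have hc0 : c ≠ [] := List.ne_nil_of_mem hvc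
  have hrev : c.reverse <:+ q := isSuffix_of_isInfix_of_getLast? hq hcq hqv (by simpa using hvc)
  have hlast : c.getLast? = some v := by
    rw [(isSuffix_of_isInfix_of_getLast? hp hcp hpv hvc).getLast?_eq hc0, hpv]
  have hhead : c.head? = some v := by
    rw [← List.getLast?_reverse, hrev.getLast?_eq (by simpa using hc0), hqv]
  have hcv := eq_singleton_of_head?_of_getLast? (hcp.sublist.nodup hp) hhead hlast
  simpa [hcv] using hrev

end SharedSuffix

/-- In a tree-consistent network graph with positive edge weights, if `x` lies
on `P(u,v)` with the portion of `P(u,v)` after `x` of weight `δ'`, and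
`|P(u,v) ∩ P(z,v)| ≥ δ'`, then `x` lies on `P(z,v)`, at cumulative distance
`|P(z,v)| − δ'` from `z`. -/
theorem stmt_16 {V : Type} [DecidableEq V]
    (E : V → V → Prop) (W : V × V → ℝ) (VB : Set V) (P : V → V → List V)
    (hwf : WellFormed E VB P) (htc : TreeConsistent VB P)
    (hWpos : ∀ u v : V, E u v → 0 < W (u, v))
    (u v z : V) (hu : u ∈ VB) (hv : v ∈ VB) (hz : z ∈ VB)
    (huv : u ≠ v) (hzv : z ≠ v)
    (x : V) (hx : x ∈ P u v)
    (hge : interLen W (P u v) (P z v) ≥ pathLen W (P u v) - distTo W (P u v) x) :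
    x ∈ P z v ∧
      distTo W (P z v) x =
        pathLen W (P z v) - (pathLen W (P u v) - distTo W (P u v) x) := by
  obtain ⟨-, hpv, hp, hpE, -⟩ := hwf u v hu hv huv
  obtain ⟨-, hqv, hq, -, -⟩ := hwf z v hz hv hzv
  obtain ⟨c, hcp, hcq, hc⟩ := htc u v z v hu hv hz hv huv hzv
  have hvc : v ∈ c := (hc v).1 ⟨List.mem_of_getLast? hpv, List.mem_of_getLast? hqv⟩
  have hcp' : c <:+ P u v := isSuffix_of_isInfix_of_getLast? hp hcp hpv hvc
  have hcq' : c <:+ P z v := isSuffix_of_isInfix_or_reverse hp hq hpv hqv hvc hcp hcq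
  have hinter : interLen W (P u v) (P z v) = pathLen W c :=
    interLen_eq_pathLen_of_isSuffix W hp hcp' hcq' (List.ne_nil_of_mem hvc)
      fun y hyp hyq => (hc y).1 ⟨hyp, hyq⟩
  obtain ⟨s, r, hsr⟩ := List.append_of_mem hx
  have hxp : x :: r <:+ P u v := ⟨s, hsr.symm⟩
  have hpos : ∀ e ∈ pathEdges (P u v), 0 < W e :=
    fun e he => hWpos _ _ (rel_of_mem_pathEdges hpE he)
  rw [hp.distTo_eq_sub W hxp] at hge ⊢
  have hxc : x :: r <:+ c :=
    isSuffix_of_pathLen_le W hpos hxp hcp' (List.ne_nil_of_mem hvc) (by linarith)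
  have hxq : x :: r <:+ P z v := hxc.trans hcq'
  refine ⟨hxq.mem List.mem_cons_self, ?_⟩
  rw [hq.distTo_eq_sub W hxq]
  ring
end
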